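/- arXiv:2008.10096 — 2 statements merged into one kernel-verified Lean document; each statement's English description precedes it below -/
import Mathlib

section
/- Let ℓ ≥ 5 be a prime and q an integer with q ≡ 1 (mod ℓ). Suppose (q_i)_{i∈I} is a finite family of powers of q and (n_i)_{i∈I} a family of integers with n_i ≥ 2, such that the product over i of (q_i^{n_i-1}−1)_ℓ · (q_i^{n_i-2}−1)_ℓ · … · (q_i−1)_ℓ divides the product over i of gcd(q_i−1, n_i). Then the index set I is empty. -/
/-- The ℓ-part of a natural number: the largest power of ℓ dividing it. -/
def lpart (ℓ n : ℕ) : ℕ := ℓ ^ (n.factorization ℓ)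

/-- Let `ℓ ≥ 5` be a prime and `q ≡ 1 (mod ℓ)`.  If `(qᵢ)` is a finite family of powers of `q`
(`qᵢ = q ^ m i` with `m i ≥ 1`) and `(nᵢ)` a family of integers `≥ 2` such that
`∏ᵢ (qᵢ^(nᵢ-1) - 1)_ℓ ⋯ (qᵢ - 1)_ℓ` divides `∏ᵢ gcd (qᵢ - 1) nᵢ`, then the index set is empty. -/
theorem stmt_3 {ℓ q : ℕ} (hℓ : ℓ.Prime) (h5 : 5 ≤ ℓ) (hq : 2 ≤ q)
    (hmod : q ≡ 1 [MOD ℓ]) {ι : Type*} (I : Finset ι)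
    (m n : ι → ℕ) (hm : ∀ i ∈ I, 1 ≤ m i) (hn : ∀ i ∈ I, 2 ≤ n i)
    (hdvd : (∏ i ∈ I, ∏ k ∈ Finset.Icc 1 (n i - 1), lpart ℓ (q ^ (m i * k) - 1)) ∣
      ∏ i ∈ I, Nat.gcd (q ^ (m i) - 1) (n i)) :
    I = ∅ := by
  by_contra hI
  obtain ⟨i0, hi0⟩ := Finset.nonempty_iff_ne_empty.mpr hI
  have hpow : ∀ x : ℕ, 1 ≤ x → 0 < q ^ x - 1 := by
    intro x hx
    have : 1 < q ^ x := Nat.one_lt_pow (by omega) (by omega)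
    omega
  have hgpos : ∀ i ∈ I, 0 < Nat.gcd (q ^ m i - 1) (n i) := by
    intro i hi
    exact Nat.gcd_pos_of_pos_right _ (by have := hn i hi; omega)
  have hRne : (∏ i ∈ I, Nat.gcd (q ^ m i - 1) (n i)) ≠ 0 :=
    Finset.prod_ne_zero_iff.mpr fun i hi => (hgpos i hi).ne'
  have hlp : ∀ x : ℕ, lpart ℓ x ≠ 0 := fun x => (pow_pos hℓ.pos _).ne'
  have hLne : (∏ i ∈ I, ∏ k ∈ Finset.Icc 1 (n i - 1), lpart ℓ (q ^ (m i * k) - 1)) ≠ 0 := by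
    refine Finset.prod_ne_zero_iff.mpr fun i hi => Finset.prod_ne_zero_iff.mpr fun k hk => ?_
    exact hlp _
  have hle := (Nat.factorization_le_iff_dvd hLne hRne).mpr hdvd
  have hle' : (∏ i ∈ I, ∏ k ∈ Finset.Icc 1 (n i - 1),
      lpart ℓ (q ^ (m i * k) - 1)).factorization ℓ ≤
      (∏ i ∈ I, Nat.gcd (q ^ m i - 1) (n i)).factorization ℓ := hle ℓ
  -- rewrite factorizations of products as sums
  have hLfac : (∏ i ∈ I, ∏ k ∈ Finset.Icc 1 (n i - 1),
      lpart ℓ (q ^ (m i * k) - 1)).factorization ℓ =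
      ∑ i ∈ I, ∑ k ∈ Finset.Icc 1 (n i - 1), (q ^ (m i * k) - 1).factorization ℓ := by
    rw [Nat.factorization_prod (fun i hi => Finset.prod_ne_zero_iff.mpr
      fun k hk => hlp _)]
    rw [Finset.sum_apply']
    refine Finset.sum_congr rfl fun i hi => ?_
    rw [Nat.factorization_prod (fun k hk => hlp _)]
    rw [Finset.sum_apply']
    refine Finset.sum_congr rfl fun k hk => ?_
    unfold lpart
    rw [hℓ.factorization_pow, Finsupp.single_eq_same]
  have hRfac : (∏ i ∈ I, Nat.gcd (q ^ m i - 1) (n i)).factorization ℓ =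
      ∑ i ∈ I, (Nat.gcd (q ^ m i - 1) (n i)).factorization ℓ := by
    rw [Nat.factorization_prod (fun i hi => (hgpos i hi).ne')]
    rw [Finset.sum_apply']
  rw [hLfac, hRfac] at hle'
  -- strict inequality per index
  have key : ∀ i ∈ I, (Nat.gcd (q ^ m i - 1) (n i)).factorization ℓ <
      ∑ k ∈ Finset.Icc 1 (n i - 1), (q ^ (m i * k) - 1).factorization ℓ := by
    intro i hi
    have hmi := hm i hi
    have hni := hn i hi
    set a := (q ^ m i - 1).factorization ℓ with ha
    have hqm1 : 0 < q ^ m i - 1 := hpow _ hmi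
    have hdvdℓ : ℓ ∣ q ^ m i - 1 := by
      have h1 : (1 : ℕ) ≡ q ^ m i [MOD ℓ] := by simpa using (hmod.pow (m i)).symm
      exact (Nat.modEq_iff_dvd' (Nat.one_le_iff_ne_zero.mpr (by positivity))).mp h1
    have ha1 : 1 ≤ a := hℓ.factorization_pos_of_dvd hqm1.ne' hdvdℓ
    -- each term in the sum is at least a
    have hterm : ∀ k ∈ Finset.Icc 1 (n i - 1), a ≤ (q ^ (m i * k) - 1).factorization ℓ := by
      intro k hk
      obtain ⟨hk1, hk2⟩ := Finset.mem_Icc.mp hk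
      have hd : q ^ m i - 1 ∣ q ^ (m i * k) - 1 := by
        have := Nat.sub_dvd_pow_sub_pow (q ^ m i) 1 k
        simpa [one_pow, ← pow_mul] using this
      have hne : q ^ (m i * k) - 1 ≠ 0 := (hpow _ (by nlinarith)).ne'
      exact (Nat.factorization_le_iff_dvd hqm1.ne' hne).mpr hd ℓ
    have hsum : (n i - 1) * a ≤ ∑ k ∈ Finset.Icc 1 (n i - 1),
        (q ^ (m i * k) - 1).factorization ℓ := by
      have := Finset.card_nsmul_le_sum (Finset.Icc 1 (n i - 1)) _ a hterm
      simpa [Nat.card_Icc, smul_eq_mul] using this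
    have hg1 : (Nat.gcd (q ^ m i - 1) (n i)).factorization ℓ ≤ a :=
      (Nat.factorization_le_iff_dvd (hgpos i hi).ne' hqm1.ne').mpr
        (Nat.gcd_dvd_left _ _) ℓ
    have hg2 : (Nat.gcd (q ^ m i - 1) (n i)).factorization ℓ ≤ (n i).factorization ℓ :=
      (Nat.factorization_le_iff_dvd (hgpos i hi).ne' (by omega)).mpr
        (Nat.gcd_dvd_right _ _) ℓ
    by_cases hc : (n i).factorization ℓ = 0
    · have : (Nat.gcd (q ^ m i - 1) (n i)).factorization ℓ = 0 := by omega
      have : 1 * a ≤ (n i - 1) * a := Nat.mul_le_mul_right a (by omega)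
      omega
    · have hdvdn : ℓ ∣ n i := Nat.dvd_of_factorization_pos hc
      have hnℓ : ℓ ≤ n i := Nat.le_of_dvd (by omega) hdvdn
      have h4 : 4 * a ≤ (n i - 1) * a := Nat.mul_le_mul_right a (by omega)
      omega
  have := Finset.sum_lt_sum_of_nonempty ⟨i0, hi0⟩ key
  omega
end

section
/- Let W be the Weyl group of type C_l, realized as the group S_{±l} of permutations σ of {±1,…,±l} with σ(−x) = −σ(x). Fix 2 ≤ d ≤ l and a partition of a subset J_d ⊆ {1,…,l} into blocks I_1,…,I_a each of size d, and let Φ_d be the root system of type A_{d-1}^a supported on these blocks (roots e_i − e_j for i,j in the same block). Then the stabilizer in W_{\bar Φ_d} (the type-C Weyl group on coordinates J_d) of Φ_d equals (W_{Φ_d} × ⟨∏_{i∈I_k}(i,−i) : 1 ≤ k ≤ a⟩) ⋊ S, where S ≅ S_a permutes the blocks. -/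
/-- Permutation of coordinates as automorphisms of a direct power. -/
def permAut (ι : Type*) (M : Type*) [Group M] : Equiv.Perm ι →* MulAut (ι → M) where
  toFun σ :=
    { toFun := fun s => s ∘ σ.symm
      invFun := fun s => s ∘ σ
      left_inv := fun s => by ext i; simp
      right_inv := fun s => by ext i; simp
      map_mul' := fun s t => rfl }
  map_one' := by ext s i; rfl
  map_mul' := fun σ τ => by ext s i; rfl

/-- The hyperoctahedral group (Weyl group of type `C`) on the index set `ι`, realized as
signed permutations: pairs of a sign function and a permutation. -/
abbrev SignedPerm (ι : Type*) :=
  SemidirectProduct (ι → ℤˣ) (Equiv.Perm ι) (permAut ι ℤˣ)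

/-- The action of a signed permutation on integer vectors:
`(s, π) • v = (x ↦ s x · v (π⁻¹ x))`. -/
def spAct {ι : Type*} (w : SignedPerm ι) (v : ι → ℤ) : ι → ℤ :=
  fun x => (w.left x : ℤ) * v (w.right⁻¹ x)

/-- The root `e_i − e_j`. -/
def rootAt {ι : Type*} [DecidableEq ι] (i j : ι) : ι → ℤ :=
  fun x => (if x = i then 1 else 0) - (if x = j then 1 else 0)

theorem Equiv.Perm.apply_inv_self {α : Type*} (f : Equiv.Perm α) (x : α) : f (f⁻¹ x) = x :=
  f.apply_symm_apply x

theorem Equiv.Perm.inv_apply_self {α : Type*} (f : Equiv.Perm α) (x : α) : f⁻¹ (f x) = x :=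
  f.symm_apply_apply x

namespace SPAux

variable {ι : Type*}

lemma sp_ext {w w' : SignedPerm ι} (h1 : w.left = w'.left) (h2 : w.right = w'.right) :
    w = w' := by
  cases w; cases w'; cases h1; cases h2; rfl

lemma mul_left' (w w' : SignedPerm ι) (x : ι) :
    (w * w').left x = w.left x * w'.left (w.right⁻¹ x) := rfl

lemma mul_right' (w w' : SignedPerm ι) : (w * w').right = w.right * w'.right := rfl

lemma inv_left' (w : SignedPerm ι) (x : ι) :
    (w⁻¹).left x = (w.left (w.right x))⁻¹ := rfl

lemma inv_right' (w : SignedPerm ι) : (w⁻¹).right = w.right⁻¹ := rfl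

lemma spAct_mul (w w' : SignedPerm ι) (v : ι → ℤ) :
    spAct (w * w') v = spAct w (spAct w' v) := by
  funext x
  simp only [spAct, mul_left', mul_right', Units.val_mul, mul_inv_rev, Equiv.Perm.mul_apply]
  ring

lemma spAct_one (v : ι → ℤ) : spAct (1 : SignedPerm ι) v = v := by
  funext x; simp [spAct]

lemma spAct_root [DecidableEq ι] (w : SignedPerm ι) (i j : ι) (x : ι) :
    spAct w (rootAt i j) x =
      (w.left x : ℤ) * ((if x = w.right i then 1 else 0) - (if x = w.right j then 1 else 0)) := by
  have h : ∀ k : ι, w.right⁻¹ x = k ↔ x = w.right k := fun k => by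
    rw [Equiv.Perm.inv_eq_iff_eq, eq_comm]
  simp only [spAct, rootAt, h]

lemma rootAt_cases [DecidableEq ι] {i' j' x : ι} (hne : i' ≠ j') {c : ℤˣ}
    (h : rootAt i' j' x = (c : ℤ)) : (x = i' ∧ c = 1) ∨ (x = j' ∧ c = -1) := by
  by_cases h1 : x = i'
  · left
    refine ⟨h1, Units.ext ?_⟩
    have hxj : x ≠ j' := fun hh => hne (h1 ▸ hh)
    rw [← h]; simp [rootAt, h1, hxj, hne]
  · by_cases h2 : x = j'
    · right
      refine ⟨h2, Units.ext ?_⟩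
      rw [← h]; simp [rootAt, h1, h2, hne.symm]
    · exfalso
      apply c.ne_zero
      have : rootAt i' j' x = 0 := by simp [rootAt, h1, h2]
      exact_mod_cast (this ▸ h).symm

variable {a d : ℕ}

/-- "Block signed permutation": signs constant on blocks, permutation respects blocks. -/
def BP (w : SignedPerm (Fin a × Fin d)) : Prop :=
  (∀ x y : Fin a × Fin d, x.1 = y.1 → w.left x = w.left y) ∧
  ∃ ρ : Equiv.Perm (Fin a), ∀ x : Fin a × Fin d, (w.right x).1 = ρ x.1

lemma rightInvFst {w : SignedPerm (Fin a × Fin d)} {ρ : Equiv.Perm (Fin a)}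
    (hρ : ∀ x : Fin a × Fin d, (w.right x).1 = ρ x.1) (x : Fin a × Fin d) :
    (w.right⁻¹ x).1 = ρ⁻¹ x.1 := by
  have h := hρ (w.right⁻¹ x)
  rw [Equiv.Perm.apply_inv_self] at h
  rw [h, Equiv.Perm.inv_apply_self]

lemma BP.mul {w w' : SignedPerm (Fin a × Fin d)} (h : BP w) (h' : BP w') : BP (w * w') := by
  obtain ⟨hc, ρ, hρ⟩ := h
  obtain ⟨hc', ρ', hρ'⟩ := h'
  constructor
  · intro x y hxy
    rw [mul_left', mul_left', hc x y hxy]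
    congr 1
    exact hc' _ _ (by simp only [rightInvFst hρ]; rw [hxy])
  · refine ⟨ρ * ρ', fun x => ?_⟩
    rw [mul_right']
    show (w.right (w'.right x)).1 = ρ (ρ' x.1)
    rw [hρ, hρ']

lemma BP.inv {w : SignedPerm (Fin a × Fin d)} (h : BP w) : BP w⁻¹ := by
  obtain ⟨hc, ρ, hρ⟩ := h
  constructor
  · intro x y hxy
    rw [inv_left', inv_left']
    exact congrArg _ (hc _ _ (by simp only [hρ]; rw [hxy]))
  · refine ⟨ρ⁻¹, fun x => ?_⟩
    rw [inv_right']
    exact rightInvFst hρ x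

/-- A block signed permutation maps each root of `Φ_d` to a root of `Φ_d`. -/
lemma BP.root {w : SignedPerm (Fin a × Fin d)} (hw : BP w) {i j : Fin a × Fin d}
    (hij : i ≠ j) (hb : i.1 = j.1) :
    ∃ i' j' : Fin a × Fin d, i' ≠ j' ∧ i'.1 = j'.1 ∧ spAct w (rootAt i j) = rootAt i' j' := by
  obtain ⟨hconst, ρ, hρ⟩ := hw
  have hblk : (w.right i).1 = (w.right j).1 := by rw [hρ, hρ, hb]
  have hne : w.right i ≠ w.right j := fun h => hij (w.right.injective h)
  have hsgn : w.left (w.right i) = w.left (w.right j) := hconst _ _ hblk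
  rcases Int.units_eq_one_or (w.left (w.right i)) with h1 | h1
  · refine ⟨w.right i, w.right j, hne, hblk, funext fun x => ?_⟩
    rw [spAct_root]
    by_cases hx1 : x = w.right i
    · have hv : (w.left x : ℤ) = 1 := by rw [hx1, h1]; rfl
      rw [hv, one_mul]; simp [rootAt]
    · by_cases hx2 : x = w.right j
      · have hv : (w.left x : ℤ) = 1 := by rw [hx2, ← hsgn, h1]; rfl
        rw [hv, one_mul]; simp [rootAt]
      · simp [rootAt, hx1, hx2]
  · refine ⟨w.right j, w.right i, hne.symm, hblk.symm, funext fun x => ?_⟩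
    rw [spAct_root]
    by_cases hx1 : x = w.right i
    · have hv : (w.left x : ℤ) = -1 := by rw [hx1, h1]; rfl
      have hx2 : x ≠ w.right j := by rw [hx1]; exact hne
      rw [hv]; simp [rootAt, hx1, hx2]
    · by_cases hx2 : x = w.right j
      · have hv : (w.left x : ℤ) = -1 := by rw [hx2, ← hsgn, h1]; rfl
        rw [hv]; simp [rootAt, hx1, hx2]
      · simp [rootAt, hx1, hx2]

/-- Key extraction: a signed permutation stabilizing the root set sends same-block pairs
to same-block pairs with equal signs. -/
lemma key (w : SignedPerm (Fin a × Fin d))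
    (h : ∀ i j : Fin a × Fin d, i ≠ j → i.1 = j.1 →
      ∃ i' j' : Fin a × Fin d, i' ≠ j' ∧ i'.1 = j'.1 ∧ spAct w (rootAt i j) = rootAt i' j')
    {i j : Fin a × Fin d} (hij : i ≠ j) (hb : i.1 = j.1) :
    (w.right i).1 = (w.right j).1 ∧ w.left (w.right i) = w.left (w.right j) := by
  obtain ⟨i', j', hne, hblk, heq⟩ := h i j hij hb
  have hpij : w.right i ≠ w.right j := fun hh => hij (w.right.injective hh)
  have hvi : rootAt i' j' (w.right i) = ((w.left (w.right i) : ℤˣ) : ℤ) := by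
    have hthis := congrFun heq (w.right i)
    rw [spAct_root, if_pos rfl, if_neg hpij] at hthis
    rw [← hthis]; ring
  have hvj : rootAt i' j' (w.right j) = ((-(w.left (w.right j)) : ℤˣ) : ℤ) := by
    have hthis := congrFun heq (w.right j)
    rw [spAct_root, if_pos rfl, if_neg (Ne.symm hpij)] at hthis
    rw [← hthis]; push_cast; ring
  rcases rootAt_cases hne hvi with ⟨hpi, hsi⟩ | ⟨hpi, hsi⟩ <;>
    rcases rootAt_cases hne hvj with ⟨hpj, hsj⟩ | ⟨hpj, hsj⟩
  · exact absurd (hpi.trans hpj.symm) hpij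
  · refine ⟨by rw [hpi, hpj]; exact hblk, ?_⟩
    rw [hsi, neg_inj.mp hsj]
  · refine ⟨by rw [hpi, hpj]; exact hblk.symm, ?_⟩
    rw [hsi, neg_eq_iff_eq_neg.mp hsj]
  · exact absurd (hpi.trans hpj.symm) hpij


/-- Every stabilizing signed permutation is a block signed permutation. -/
lemma factor (hd : 2 ≤ d) (w : SignedPerm (Fin a × Fin d))
    (h : ∀ i j : Fin a × Fin d, i ≠ j → i.1 = j.1 →
      ∃ i' j' : Fin a × Fin d, i' ≠ j' ∧ i'.1 = j'.1 ∧ spAct w (rootAt i j) = rootAt i' j') :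
    BP w := by
  have t0 : Fin d := ⟨0, by omega⟩
  set f : Fin a → Fin a := fun k => (w.right (k, t0)).1 with hf
  have blk : ∀ x : Fin a × Fin d, (w.right x).1 = f x.1 := by
    rintro ⟨k, t⟩
    by_cases ht : t = t0
    · rw [ht]
    · exact (key w h (i := (k, t)) (j := (k, t0)) (by simp [Prod.ext_iff, ht]) rfl).1
  have hsurj : Function.Surjective f := fun m =>
    ⟨(w.right⁻¹ (m, t0)).1, by
      show f (w.right⁻¹ (m, t0)).1 = m
      rw [← blk, Equiv.Perm.apply_inv_self]⟩
  have hbij := hsurj.bijective_of_finite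
  refine ⟨?_, Equiv.ofBijective f hbij, fun x => blk x⟩
  intro x y hxy
  by_cases hxy0 : w.right⁻¹ x = w.right⁻¹ y
  · rw [show x = y from by
      rw [← Equiv.Perm.apply_inv_self w.right x, hxy0, Equiv.Perm.apply_inv_self]]
  · have e1 : f (w.right⁻¹ x).1 = x.1 := by rw [← blk, Equiv.Perm.apply_inv_self]
    have e2 : f (w.right⁻¹ y).1 = y.1 := by rw [← blk, Equiv.Perm.apply_inv_self]
    have hbk : (w.right⁻¹ x).1 = (w.right⁻¹ y).1 := hbij.1 (e1.trans (hxy.trans e2.symm))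
    have hres := (key w h hxy0 hbk).2
    rwa [Equiv.Perm.apply_inv_self, Equiv.Perm.apply_inv_self] at hres

lemma mk_mul_mk_mul_mk {ι : Type*} (f : ι → ℤˣ) (π σ : Equiv.Perm ι) :
    (⟨1, π⟩ : SignedPerm ι) * ⟨f, 1⟩ * ⟨1, σ⟩ = ⟨fun x => f (π⁻¹ x), π * σ⟩ := by
  refine sp_ext (funext fun x => ?_) ?_
  · simp [mul_left']
  · simp [mul_right']

/-- Decomposition of a block signed permutation. -/
lemma BP.decomp (w : SignedPerm (Fin a × Fin d))
    (hc : ∀ x y : Fin a × Fin d, x.1 = y.1 → w.left x = w.left y)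
    (ρ : Equiv.Perm (Fin a)) (hρ : ∀ x : Fin a × Fin d, (w.right x).1 = ρ x.1) :
    ∃ u cs s : SignedPerm (Fin a × Fin d),
      (u.left = 1 ∧ ∀ x : Fin a × Fin d, (u.right x).1 = x.1) ∧
      (cs.right = 1 ∧ ∀ x y : Fin a × Fin d, x.1 = y.1 → cs.left x = cs.left y) ∧
      (s.left = 1 ∧ ∃ ρ' : Equiv.Perm (Fin a), ∀ x : Fin a × Fin d, s.right x = (ρ' x.1, x.2)) ∧
      w = u * cs * s := by
  set σ : Equiv.Perm (Fin a × Fin d) := Equiv.prodCongr ρ (Equiv.refl (Fin d)) with hσdef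
  have hσinv : ∀ x : Fin a × Fin d, (σ⁻¹ x).1 = ρ.symm x.1 := fun x => rfl
  have hu2 : ∀ x : Fin a × Fin d, ((w.right * σ⁻¹) x).1 = x.1 := by
    intro x
    rw [Equiv.Perm.mul_apply, hρ, hσinv, Equiv.apply_symm_apply]
  refine ⟨⟨1, w.right * σ⁻¹⟩, ⟨w.left, 1⟩, ⟨1, σ⟩, ⟨rfl, hu2⟩, ⟨rfl, hc⟩,
    ⟨rfl, ρ, fun x => rfl⟩, ?_⟩
  rw [mk_mul_mk_mul_mk]
  refine sp_ext (funext fun x => ?_) ?_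
  · show w.left x = w.left ((w.right * σ⁻¹)⁻¹ x)
    refine hc x _ ?_
    have h := hu2 ((w.right * σ⁻¹)⁻¹ x)
    rwa [Equiv.Perm.apply_inv_self] at h
  · show w.right = w.right * σ⁻¹ * σ
    rw [inv_mul_cancel_right]

end SPAux

open SPAux in
/-- Stabilizer of the type-A root system on blocks inside the type-C Weyl group
(Proposition 4.4): with coordinates `J = Fin a × Fin d` partitioned into `a` blocks of
size `d ≥ 2`, and `Φ_d` the set of roots `e_i − e_j` for `i ≠ j` in a common block, the
setwise stabilizer of `Φ_d` in the group of signed permutations of `J` is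
`(W_{Φ_d} × ⟨∏_{i∈I_k}(i,−i)⟩) ⋊ S_a`: every stabilizing element factors (uniquely) as a
product of a within-block permutation with trivial signs, a sign change constant on
blocks, and a block permutation, and the first two kinds of elements commute. -/
theorem stmt_12 (a d : ℕ) (hd : 2 ≤ d)
    (Φd : Set ((Fin a × Fin d) → ℤ))
    (hΦd : Φd = {v | ∃ i j : Fin a × Fin d, i ≠ j ∧ i.1 = j.1 ∧ v = rootAt i j})
    (Wperm Csigns Sblocks : Set (SignedPerm (Fin a × Fin d)))
    (hWperm : Wperm = {w | w.left = 1 ∧ ∀ x : Fin a × Fin d, (w.right x).1 = x.1})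
    (hCsigns : Csigns = {w | w.right = 1 ∧
      ∀ x y : Fin a × Fin d, x.1 = y.1 → w.left x = w.left y})
    (hSblocks : Sblocks = {w | w.left = 1 ∧
      ∃ ρ : Equiv.Perm (Fin a), ∀ x : Fin a × Fin d, w.right x = (ρ x.1, x.2)}) :
    (∀ w : SignedPerm (Fin a × Fin d),
      (spAct w '' Φd = Φd ↔ ∃ u ∈ Wperm, ∃ cs ∈ Csigns, ∃ s ∈ Sblocks, w = u * cs * s)) ∧
    (∀ u ∈ Wperm, ∀ cs ∈ Csigns, u * cs = cs * u) ∧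
    (∀ u u' cs cs' s s' : SignedPerm (Fin a × Fin d),
      u ∈ Wperm → u' ∈ Wperm → cs ∈ Csigns → cs' ∈ Csigns → s ∈ Sblocks → s' ∈ Sblocks →
      u * cs * s = u' * cs' * s' → u = u' ∧ cs = cs' ∧ s = s') := by
  subst hΦd hWperm hCsigns hSblocks
  refine ⟨?_, ?_, ?_⟩
  · intro w
    constructor
    · intro himg
      have h1 : ∀ i j : Fin a × Fin d, i ≠ j → i.1 = j.1 →
          ∃ i' j' : Fin a × Fin d, i' ≠ j' ∧ i'.1 = j'.1 ∧
            spAct w (rootAt i j) = rootAt i' j' := by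
        intro i j hij hb
        have hv : rootAt i j ∈ {v : (Fin a × Fin d) → ℤ |
            ∃ i j : Fin a × Fin d, i ≠ j ∧ i.1 = j.1 ∧ v = rootAt i j} := ⟨i, j, hij, hb, rfl⟩
        have hm := Set.mem_image_of_mem (spAct w) hv
        rw [himg] at hm
        exact hm
      obtain ⟨hc, ρ, hρ⟩ := factor hd w h1
      obtain ⟨u, cs, s, hu, hcs, hs, hw⟩ := BP.decomp w hc ρ hρ
      exact ⟨u, hu, cs, hcs, s, hs, hw⟩
    · rintro ⟨u, hu, cs, hcs, s, hs, rfl⟩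
      have bu : BP u := ⟨fun x y _ => by simp [hu.1], 1, fun x => by rw [hu.2 x]; rfl⟩
      have bcs : BP cs := ⟨hcs.2, 1, fun x => by rw [hcs.1]; rfl⟩
      have bs : BP s := by
        obtain ⟨ρ, hρ⟩ := hs.2
        exact ⟨fun x y _ => by simp [hs.1], ρ, fun x => by rw [hρ x]⟩
      have bw : BP (u * cs * s) := (bu.mul bcs).mul bs
      apply Set.Subset.antisymm
      · rintro _ ⟨v, ⟨i, j, hij, hb, rfl⟩, rfl⟩
        obtain ⟨i', j', h1, h2, h3⟩ := bw.root hij hb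
        exact ⟨i', j', h1, h2, h3⟩
      · rintro v ⟨i, j, hij, hb, rfl⟩
        obtain ⟨i', j', h1, h2, h3⟩ := bw.inv.root hij hb
        refine ⟨spAct (u * cs * s)⁻¹ (rootAt i j), ⟨i', j', h1, h2, h3⟩, ?_⟩
        rw [← spAct_mul, mul_inv_cancel, spAct_one]
  · intro u hu cs hcs
    refine sp_ext (funext fun x => ?_) ?_
    · rw [mul_left', mul_left', hu.1, hcs.1]
      simp only [Pi.one_apply, one_mul, mul_one]
      have h := hu.2 (u.right⁻¹ x)
      rw [Equiv.Perm.apply_inv_self] at h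
      exact hcs.2 _ _ h.symm
    · rw [mul_right', mul_right', hcs.1, mul_one, one_mul]
  · intro u u' cs cs' s s' hu hu' hcs hcs' hs hs' heq
    obtain ⟨ρ, hρ⟩ := hs.2
    obtain ⟨ρ', hρ'⟩ := hs'.2
    have hr : u.right * s.right = u'.right * s'.right := by
      have h := congrArg SemidirectProduct.right heq
      rw [mul_right', mul_right', mul_right', mul_right', hcs.1, hcs'.1, mul_one, mul_one] at h
      exact h
    have t0 : Fin d := ⟨0, by omega⟩
    have hρeq : ρ = ρ' := by
      refine Equiv.ext fun k => ?_
      have h := congrArg (fun π : Equiv.Perm (Fin a × Fin d) => (π (k, t0)).1) hr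
      simp only [Equiv.Perm.mul_apply] at h
      rw [hu.2, hu'.2, hρ, hρ'] at h
      simpa using h
    have hsr : s.right = s'.right :=
      Equiv.ext fun x => (hρ x).trans (by rw [hρeq]; exact (hρ' x).symm)
    have hseq : s = s' := sp_ext (hs.1.trans hs'.1.symm) hsr
    have hur : u.right = u'.right := mul_right_cancel (hr.trans (by rw [hsr]))
    have hueq : u = u' := sp_ext (hu.1.trans hu'.1.symm) hur
    have hcseq : cs = cs' := by
      rw [hueq, hseq] at heq
      exact mul_left_cancel (mul_right_cancel heq)
    exact ⟨hueq, hcseq, hseq⟩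
end
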